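/- arXiv:2605.10939 — 6 statements merged into one kernel-verified Lean document; each statement's English description precedes it below -/
import Mathlib

section
/- Let X be a centered log-concave real random variable and let 1 ≤ p ≤ q. Then (E|X|^q)^{1/q} ≤ C·(q/p)·(E|X|^p)^{1/p} for an absolute constant C > 0. -/
open MeasureTheory Real Set

lemma aux_rpow_le_exp {d y q : ℝ} (hd : 0 < d) (hy : 0 ≤ y) (hq : 0 < q) :
    y ^ q ≤ (q / (Real.exp 1 * d)) ^ q * Real.exp (d * y) := by
  rcases eq_or_lt_of_le hy with h0 | h0
  · rw [← h0, Real.zero_rpow hq.ne']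
    positivity
  · have hb : 0 < q / (Real.exp 1 * d) := by positivity
    rw [Real.rpow_def_of_pos h0, Real.rpow_def_of_pos hb, ← Real.exp_add]
    apply Real.exp_le_exp.mpr
    have key : Real.log (y * d / q) ≤ y * d / q - 1 :=
      Real.log_le_sub_one_of_pos (by positivity)
    have h1 : Real.log (y * d / q) = Real.log y + Real.log d - Real.log q := by
      rw [Real.log_div (by positivity) hq.ne', Real.log_mul h0.ne' hd.ne']
    have h2 : Real.log (q / (Real.exp 1 * d)) = Real.log q - 1 - Real.log d := by
      rw [Real.log_div hq.ne' (by positivity), Real.log_mul (Real.exp_pos 1).ne' hd.ne',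
        Real.log_exp]
      ring
    rw [h2]
    have key2 : q * Real.log (y * d / q) ≤ q * (y * d / q - 1) :=
      mul_le_mul_of_nonneg_left key hq.le
    rw [h1] at key2
    have : q * (y * d / q - 1) = y * d - q := by field_simp
    nlinarith
lemma aux_qc (f : ℝ → ℝ) (hnn : ∀ x, 0 ≤ f x)
    (hlc : ∀ x y a b : ℝ, 0 ≤ a → 0 ≤ b → a + b = 1 →
      f x ^ a * f y ^ b ≤ f (a * x + b * y))
    {z u x : ℝ} (hzu : z ≤ u) (hux : u ≤ x) : min (f z) (f x) ≤ f u := by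
  rcases eq_or_lt_of_le (hzu.trans hux) with hzx | hzx
  · have : u = z := le_antisymm (hzx ▸ hux) hzu
    simp [this, min_le_left]
  · set a := (x - u) / (x - z) with ha_def
    set b := (u - z) / (x - z) with hb_def
    have hxz : (0:ℝ) < x - z := by linarith
    have ha : 0 ≤ a := by apply div_nonneg <;> linarith
    have hb : 0 ≤ b := by apply div_nonneg <;> linarith
    have hab : a + b = 1 := by
      rw [ha_def, hb_def, ← add_div, div_eq_one_iff_eq hxz.ne']
      ring
    have hu : a * z + b * x = u := by
      rw [ha_def, hb_def, div_mul_eq_mul_div, div_mul_eq_mul_div, ← add_div,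
        div_eq_iff hxz.ne']
      ring
    have key := hlc z x a b ha hb hab
    rw [hu] at key
    set μ := min (f z) (f x) with hμ_def
    have hμ0 : 0 ≤ μ := le_min (hnn z) (hnn x)
    rcases eq_or_lt_of_le hμ0 with h | h
    · exact h ▸ hnn u
    · calc μ = μ ^ a * μ ^ b := by
            rw [← Real.rpow_add h, hab, Real.rpow_one]
        _ ≤ f z ^ a * f x ^ b :=
            mul_le_mul (Real.rpow_le_rpow hμ0 (min_le_left _ _) ha)
              (Real.rpow_le_rpow hμ0 (min_le_right _ _) hb)
              (Real.rpow_nonneg hμ0 b) (Real.rpow_nonneg (hnn z) a)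
        _ ≤ f u := key


set_option maxHeartbeats 2000000 in
lemma aux_oneside (f : ℝ → ℝ) (hnn : ∀ x, 0 ≤ f x) (hmeas : Measurable f)
    (hint : Integrable f) (hf1 : ∫ x, f x = 1)
    (hlc : ∀ x y a b : ℝ, 0 ≤ a → 0 ≤ b → a + b = 1 →
      f x ^ a * f y ^ b ≤ f (a * x + b * y))
    (hmom : ∀ p : ℝ, 1 ≤ p → Integrable (fun x => |x| ^ p * f x))
    (p q : ℝ) (hp : 1 ≤ p) (hpq : p ≤ q)
    (hm : 0 < ∫ x, |x| ^ p * f x) :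
    ∫ x in Ici (0:ℝ), |x| ^ q * f x
      ≤ 4 * (25 * (q / p) * (∫ x, |x| ^ p * f x) ^ (1 / p)) ^ q := by
  have hp0 : 0 < p := lt_of_lt_of_le one_pos hp
  have hq1 : 1 ≤ q := hp.trans hpq
  have hq0 : 0 < q := lt_of_lt_of_le one_pos hq1
  set m : ℝ := ∫ x, |x| ^ p * f x with hm_def
  set t0 : ℝ := Real.exp 1 * m ^ (1 / p) with ht0_def
  have ht0 : 0 < t0 := by positivity
  have he1 : (2.7182818283 : ℝ) < Real.exp 1 := Real.exp_one_gt_d9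
  -- t0 ^ p = exp p * m
  have ht0p : t0 ^ p = Real.exp p * m := by
    rw [ht0_def, Real.mul_rpow (Real.exp_pos 1).le (Real.rpow_nonneg hm.le _),
      ← Real.rpow_mul hm.le, one_div, inv_mul_cancel₀ hp0.ne', Real.rpow_one,
      ← Real.exp_one_rpow p]
  -- Markov right
  have hGR : ∫ x in Ici t0, f x ≤ Real.exp (-p) := by
    have key : ∀ x ∈ Ici t0, f x ≤ |x| ^ p * f x / t0 ^ p := by
      intro x hx
      have habs : t0 ≤ |x| := le_trans hx (le_abs_self x)
      have h1 : t0 ^ p ≤ |x| ^ p := Real.rpow_le_rpow ht0.le habs hp0.le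
      rw [le_div_iff₀ (by positivity : (0:ℝ) < t0 ^ p)]
      calc f x * t0 ^ p ≤ f x * |x| ^ p := mul_le_mul_of_nonneg_left h1 (hnn x)
        _ = |x| ^ p * f x := mul_comm _ _
    have h2 : ∫ x in Ici t0, f x ≤ ∫ x in Ici t0, |x| ^ p * f x / t0 ^ p :=
      setIntegral_mono_on hint.integrableOn ((hmom p hp).div_const _).integrableOn
        measurableSet_Ici key
    have h3 : ∫ x in Ici t0, |x| ^ p * f x / t0 ^ p
        = (∫ x in Ici t0, |x| ^ p * f x) / t0 ^ p := integral_div _ _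
    have h4 : ∫ x in Ici t0, |x| ^ p * f x ≤ m :=
      setIntegral_le_integral (hmom p hp)
        (Filter.Eventually.of_forall fun x => mul_nonneg (Real.rpow_nonneg (abs_nonneg x) p) (hnn x))
    have h5 : (∫ x in Ici t0, |x| ^ p * f x) / t0 ^ p ≤ m / t0 ^ p :=
      (div_le_div_iff_of_pos_right (show (0:ℝ) < t0 ^ p by rw [ht0p]; exact mul_pos (Real.exp_pos p) hm)).mpr h4
    have h6 : m / t0 ^ p = Real.exp (-p) := by
      rw [ht0p, Real.exp_neg]
      field_simp
    linarith
  have hGR0 : 0 ≤ ∫ x in Ici t0, f x :=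
    setIntegral_nonneg measurableSet_Ici fun x _ => hnn x
  -- Markov left
  have hGL : ∫ x in Iic (-t0), f x ≤ Real.exp (-p) := by
    have key : ∀ x ∈ Iic (-t0), f x ≤ |x| ^ p * f x / t0 ^ p := by
      intro x hx
      have habs : t0 ≤ |x| := le_trans (by simp at hx ⊢; linarith [hx] : t0 ≤ -x) (neg_le_abs x)
      have h1 : t0 ^ p ≤ |x| ^ p := Real.rpow_le_rpow ht0.le habs hp0.le
      rw [le_div_iff₀ (by positivity : (0:ℝ) < t0 ^ p)]
      calc f x * t0 ^ p ≤ f x * |x| ^ p := mul_le_mul_of_nonneg_left h1 (hnn x)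
        _ = |x| ^ p * f x := mul_comm _ _
    have h2 : ∫ x in Iic (-t0), f x ≤ ∫ x in Iic (-t0), |x| ^ p * f x / t0 ^ p :=
      setIntegral_mono_on hint.integrableOn ((hmom p hp).div_const _).integrableOn
        measurableSet_Iic key
    have h3 : ∫ x in Iic (-t0), |x| ^ p * f x / t0 ^ p
        = (∫ x in Iic (-t0), |x| ^ p * f x) / t0 ^ p := integral_div _ _
    have h4 : ∫ x in Iic (-t0), |x| ^ p * f x ≤ m :=
      setIntegral_le_integral (hmom p hp)
        (Filter.Eventually.of_forall fun x => mul_nonneg (Real.rpow_nonneg (abs_nonneg x) p) (hnn x))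
    have h5 : (∫ x in Iic (-t0), |x| ^ p * f x) / t0 ^ p ≤ m / t0 ^ p :=
      (div_le_div_iff_of_pos_right (show (0:ℝ) < t0 ^ p by rw [ht0p]; exact mul_pos (Real.exp_pos p) hm)).mpr h4
    have h6 : m / t0 ^ p = Real.exp (-p) := by
      rw [ht0p, Real.exp_neg]
      field_simp
    linarith
  -- middle mass
  have hmid : (1 : ℝ) - 2 * Real.exp (-p) ≤ ∫ x in Ioo (-t0) t0, f x := by
    have hcompl : (Ioo (-t0) t0)ᶜ = Iic (-t0) ∪ Ici t0 := by
      ext x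
      simp only [mem_compl_iff, mem_Ioo, mem_union, mem_Iic, mem_Ici, not_and_or, not_lt]
    have hdisj : Disjoint (Iic (-t0)) (Ici t0) := by
      rw [Set.disjoint_left]
      intro x h1 h2
      simp only [mem_Iic] at h1
      simp only [mem_Ici] at h2
      linarith
    have hsplit := integral_add_compl (measurableSet_Ioo (a := -t0) (b := t0)) hint
    rw [hcompl, setIntegral_union hdisj measurableSet_Ici hint.integrableOn
      hint.integrableOn, hf1] at hsplit
    linarith
  -- anchor point
  obtain ⟨z, hz, hfz⟩ : ∃ z ∈ Ioo (-t0) t0, 1 / (8 * t0) ≤ f z := by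
    by_contra hcon
    push_neg at hcon
    have h1 : ∫ x in Ioo (-t0) t0, f x ≤ ∫ x in Ioo (-t0) t0, (1 / (8 * t0) : ℝ) :=
      setIntegral_mono_on hint.integrableOn
        (integrableOn_const measure_Ioo_lt_top.ne) measurableSet_Ioo
        (fun x hx => (hcon x hx).le)
    have h2 : ∫ x in Ioo (-t0) t0, (1 / (8 * t0) : ℝ) = (t0 - -t0) * (1 / (8 * t0)) := by
      rw [setIntegral_const, Real.volume_real_Ioo, max_eq_left (by linarith), smul_eq_mul]
    have hval : (t0 - -t0) * (1 / (8 * t0)) = 1 / 4 := by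
      field_simp
      ring
    have hexp : Real.exp (-p) ≤ Real.exp (-1) := Real.exp_le_exp.mpr (by linarith)
    have hilt : Real.exp (-1) < 0.368 := by
      rw [Real.exp_neg]
      have h3 : (0.368 : ℝ)⁻¹ < Real.exp 1 := by
        rw [show ((0.368:ℝ))⁻¹ = 1/0.368 by ring]
        nlinarith [he1]
      calc (Real.exp 1)⁻¹ < ((0.368:ℝ)⁻¹)⁻¹ := by
            apply inv_strictAnti₀ (by norm_num) h3
        _ = 0.368 := by norm_num
    linarith
  have hfz0 : 0 < f z := lt_of_lt_of_le (by positivity) hfz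
  -- pointwise polynomial bound
  have hexp1 : Real.exp (-p) ≤ Real.exp (-1) := Real.exp_le_exp.mpr (by linarith)
  have hexp1' : Real.exp (-1) < 1 := by
    rw [Real.exp_neg]
    rw [inv_lt_one_iff₀]
    right
    linarith
  have hF : ∀ x : ℝ, 9 * t0 ≤ x → f x ≤ Real.exp (-p) / (8 * t0) := by
    intro x hx
    have hzt : z ≤ t0 := hz.2.le
    have htx : t0 ≤ x := by linarith
    have hIcc : ∫ u in Icc t0 x, f u ≤ ∫ u in Ici t0, f u :=
      setIntegral_mono_set hint.integrableOn
        (Filter.Eventually.of_forall fun x => hnn x)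
        (HasSubset.Subset.eventuallyLE Icc_subset_Ici_self)
    by_cases hcase : f z ≤ f x
    · exfalso
      have hmin : ∀ u ∈ Icc t0 x, 1 / (8 * t0) ≤ f u := by
        intro u hu
        have h1 := aux_qc f hnn hlc (le_trans hzt hu.1) hu.2
        rw [min_eq_left hcase] at h1
        linarith
      have h1 : ∫ u in Icc t0 x, (1 / (8 * t0) : ℝ) ≤ ∫ u in Icc t0 x, f u :=
        setIntegral_mono_on (integrableOn_const measure_Icc_lt_top.ne)
          hint.integrableOn measurableSet_Icc hmin
      have h2 : ∫ u in Icc t0 x, (1 / (8 * t0) : ℝ) = (x - t0) * (1 / (8 * t0)) := by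
        rw [setIntegral_const, Real.volume_real_Icc, max_eq_left (by linarith),
          smul_eq_mul]
      have h3 : (1:ℝ) ≤ (x - t0) * (1 / (8 * t0)) := by
        rw [mul_one_div, le_div_iff₀ (by positivity : (0:ℝ) < 8 * t0), one_mul]
        linarith
      linarith
    · push_neg at hcase
      have hmin : ∀ u ∈ Icc t0 x, f x ≤ f u := by
        intro u hu
        have h1 := aux_qc f hnn hlc (le_trans hzt hu.1) hu.2
        rwa [min_eq_right hcase.le] at h1
      have h1 : ∫ u in Icc t0 x, f x ≤ ∫ u in Icc t0 x, f u :=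
        setIntegral_mono_on (integrableOn_const measure_Icc_lt_top.ne)
          hint.integrableOn measurableSet_Icc hmin
      have h2 : ∫ u in Icc t0 x, f x = (x - t0) * f x := by
        rw [setIntegral_const, Real.volume_real_Icc, max_eq_left (by linarith),
          smul_eq_mul]
      have h3 : 8 * t0 * f x ≤ (x - t0) * f x :=
        mul_le_mul_of_nonneg_right (by linarith) (hnn x)
      rw [le_div_iff₀ (by positivity : (0:ℝ) < 8 * t0)]
      calc f x * (8 * t0) = 8 * t0 * f x := mul_comm _ _
        _ ≤ (x - t0) * f x := h3
        _ ≤ Real.exp (-p) := by rw [← h2]; linarith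
  -- pointwise exponential bound
  set c : ℝ := p / (10 * t0) with hc_def
  have hc : 0 < c := by positivity
  have hG : ∀ x : ℝ, 9 * t0 ≤ x →
      f x ≤ Real.exp (-p) / (8 * t0) * Real.exp (-(c * (x - 9 * t0))) := by
    intro x hx
    rcases eq_or_lt_of_le hx with heq | hlt
    · rw [← heq]
      simpa using hF (9 * t0) le_rfl
    · have hzx : z < x := by nlinarith [hz.2]
      have hz9 : z < 9 * t0 := by nlinarith [hz.2]
      set D : ℝ := x - z with hD_def
      have hD0 : 0 < D := by simp only [hD_def]; linarith
      set a : ℝ := (x - 9 * t0) / D with ha_def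
      set b : ℝ := (9 * t0 - z) / D with hb_def
      have ha : 0 < a := div_pos (by linarith) hD0
      have hb : 0 < b := div_pos (by linarith) hD0
      have hab : a + b = 1 := by
        rw [ha_def, hb_def, ← add_div, div_eq_one_iff_eq hD0.ne']
        ring
      have hcomb : a * z + b * x = 9 * t0 := by
        rw [ha_def, hb_def, div_mul_eq_mul_div, div_mul_eq_mul_div, ← add_div,
          div_eq_iff hD0.ne']
        ring
      have key := hlc z x a b ha.le hb.le hab
      rw [hcomb] at key
      have hR0 : 0 < Real.exp (-p) / (8 * t0) * Real.exp (-(c * (x - 9 * t0))) := by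
        positivity
      rw [← Real.rpow_le_rpow_iff (hnn x) hR0.le hb]
      have h1 : f x ^ b ≤ f (9 * t0) / f z ^ a := by
        rw [le_div_iff₀ (Real.rpow_pos_of_pos hfz0 a)]
        calc f x ^ b * f z ^ a = f z ^ a * f x ^ b := mul_comm _ _
          _ ≤ f (9 * t0) := key
      have h2 : f (9 * t0) / f z ^ a ≤ (Real.exp (-p) / (8 * t0)) / (1 / (8 * t0)) ^ a :=
        div_le_div₀ (by positivity) (hF _ le_rfl)
          (Real.rpow_pos_of_pos (by positivity) a)
          (Real.rpow_le_rpow (by positivity) hfz ha.le)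
      have h3 : (Real.exp (-p) / (8 * t0)) / (1 / (8 * t0)) ^ a
          = Real.exp (-p) * (1 / (8 * t0)) ^ b := by
        have hw : (0:ℝ) < 1 / (8 * t0) := by positivity
        have hww : (1 / (8 * t0) : ℝ) = (1 / (8 * t0)) ^ a * (1 / (8 * t0)) ^ b := by
          rw [← Real.rpow_add hw, hab, Real.rpow_one]
        calc (Real.exp (-p) / (8 * t0)) / (1 / (8 * t0)) ^ a
            = (Real.exp (-p) * (1 / (8 * t0))) / (1 / (8 * t0)) ^ a := by
              rw [div_eq_mul_one_div (Real.exp (-p)) (8 * t0)]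
          _ = (Real.exp (-p) * ((1 / (8 * t0)) ^ a * (1 / (8 * t0)) ^ b))
                / (1 / (8 * t0)) ^ a := by rw [← hww]
          _ = Real.exp (-p) * (1 / (8 * t0)) ^ b := by
              rw [mul_comm ((1 / (8 * t0) : ℝ) ^ a) _, ← mul_assoc,
                mul_div_assoc, div_self (Real.rpow_pos_of_pos hw a).ne', mul_one]
      have h4 : Real.exp (-p) * (1 / (8 * t0)) ^ b
          ≤ (Real.exp (-p) / (8 * t0) * Real.exp (-(c * (x - 9 * t0)))) ^ b := by
        rw [show Real.exp (-p) / (8 * t0) * Real.exp (-(c * (x - 9 * t0)))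
            = (Real.exp (-p) * Real.exp (-(c * (x - 9 * t0)))) * (1 / (8 * t0)) by ring,
          Real.mul_rpow (by positivity) (by positivity),
          ← Real.exp_add, ← Real.exp_mul]
        apply mul_le_mul_of_nonneg_right _ (Real.rpow_nonneg (by positivity) b)
        rw [Real.exp_le_exp]
        have hxb : (x - 9 * t0) * b = a * (9 * t0 - z) := by
          rw [ha_def, hb_def]
          ring
        have h9 : 9 * t0 - z ≤ 10 * t0 := by linarith [hz.1]
        have h10 : c * (a * (9 * t0 - z)) ≤ c * (a * (10 * t0)) :=
          mul_le_mul_of_nonneg_left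
            (mul_le_mul_of_nonneg_left h9 ha.le) hc.le
        have hct : c * (10 * t0) = p := by
          rw [hc_def]
          exact div_mul_cancel₀ p (by positivity)
        have h11 : c * ((x - 9 * t0) * b) ≤ p * a := by
          calc c * ((x - 9 * t0) * b) = c * (a * (9 * t0 - z)) := by rw [hxb]
            _ ≤ c * (a * (10 * t0)) := h10
            _ = c * (10 * t0) * a := by ring
            _ = p * a := by rw [hct]
        have hpab : p * a + p * b = p := by
          calc p * a + p * b = p * (a + b) := by ring
            _ = p := by rw [hab, mul_one]
        have hexpand : (-p + -(c * (x - 9 * t0))) * b = -(p * b) - c * ((x - 9 * t0) * b) := by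
          ring
        rw [hexpand]
        linarith [h11, hpab]
      calc f x ^ b ≤ f (9 * t0) / f z ^ a := h1
        _ ≤ (Real.exp (-p) / (8 * t0)) / (1 / (8 * t0)) ^ a := h2
        _ = Real.exp (-p) * (1 / (8 * t0)) ^ b := h3
        _ ≤ _ := h4
  -- integral bound
  have hintq := hmom q hq1
  have h9t0 : (0:ℝ) ≤ 9 * t0 := by linarith
  have hsplit : Ici (0:ℝ) = Icc 0 (9 * t0) ∪ Ioi (9 * t0) := (Icc_union_Ioi_eq_Ici h9t0).symm
  have hdisj : Disjoint (Icc (0:ℝ) (9 * t0)) (Ioi (9 * t0)) := by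
    rw [Set.disjoint_left]
    intro u h1 h2
    exact absurd h1.2 (not_le.mpr h2)
  rw [hsplit, setIntegral_union hdisj measurableSet_Ioi hintq.integrableOn hintq.integrableOn]
  -- head bound
  have hhead : ∫ x in Icc (0:ℝ) (9 * t0), |x| ^ q * f x ≤ (9 * t0) ^ q := by
    have h1 : ∫ x in Icc (0:ℝ) (9 * t0), |x| ^ q * f x
        ≤ ∫ x in Icc (0:ℝ) (9 * t0), (9 * t0) ^ q * f x :=
      setIntegral_mono_on hintq.integrableOn (hint.const_mul _).integrableOn
        measurableSet_Icc (fun x hx => by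
          apply mul_le_mul_of_nonneg_right _ (hnn x)
          apply Real.rpow_le_rpow (abs_nonneg x) _ hq0.le
          rw [abs_of_nonneg hx.1]
          exact hx.2)
    have h2 : ∫ x in Icc (0:ℝ) (9 * t0), (9 * t0) ^ q * f x
        = (9 * t0) ^ q * ∫ x in Icc (0:ℝ) (9 * t0), f x := integral_const_mul _ _
    have h3 : ∫ x in Icc (0:ℝ) (9 * t0), f x ≤ 1 := by
      rw [← hf1]
      exact setIntegral_le_integral hint (Filter.Eventually.of_forall fun x => hnn x)
    have h4 : (9 * t0) ^ q * (∫ x in Icc (0:ℝ) (9 * t0), f x) ≤ (9 * t0) ^ q * 1 :=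
      mul_le_mul_of_nonneg_left h3 (Real.rpow_nonneg (by positivity) q)
    rw [mul_one] at h4
    linarith [h2 ▸ h1]
  -- tail bound
  set B : ℝ := q / (Real.exp 1 * (c / 2)) with hB_def
  set K : ℝ := (Real.exp (-p) / (8 * t0)) * (B ^ q * Real.exp (9 * c * t0)) with hK_def
  have hc2 : 0 < c / 2 := half_pos hc
  have hB0 : 0 < B := by positivity
  have hpt : ∀ x ∈ Ioi (9 * t0), |x| ^ q * f x ≤ K * Real.exp (-(c / 2) * x) := by
    intro x hx
    have hx9 : 9 * t0 < x := hx
    have hx0 : 0 < x := lt_of_lt_of_le (by positivity) hx9.le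
    have e2 : f x ≤ Real.exp (-p) / (8 * t0) * Real.exp (-(c * (x - 9 * t0))) := hG x hx9.le
    have e3 : x ^ q ≤ B ^ q * Real.exp (c / 2 * x) := aux_rpow_le_exp hc2 hx0.le hq0
    have eexp : Real.exp (c / 2 * x) * Real.exp (-(c * (x - 9 * t0)))
        = Real.exp (9 * c * t0) * Real.exp (-(c / 2) * x) := by
      rw [← Real.exp_add, ← Real.exp_add]
      congr 1
      ring
    calc |x| ^ q * f x
        ≤ x ^ q * (Real.exp (-p) / (8 * t0) * Real.exp (-(c * (x - 9 * t0)))) := by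
          rw [abs_of_pos hx0]
          exact mul_le_mul_of_nonneg_left e2 (Real.rpow_nonneg hx0.le q)
      _ ≤ (B ^ q * Real.exp (c / 2 * x))
            * (Real.exp (-p) / (8 * t0) * Real.exp (-(c * (x - 9 * t0)))) :=
          mul_le_mul_of_nonneg_right e3 (by positivity)
      _ = (Real.exp (c / 2 * x) * Real.exp (-(c * (x - 9 * t0))))
            * (B ^ q * (Real.exp (-p) / (8 * t0))) := by ring
      _ = (Real.exp (9 * c * t0) * Real.exp (-(c / 2) * x))
            * (B ^ q * (Real.exp (-p) / (8 * t0))) := by rw [eexp]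
      _ = K * Real.exp (-(c / 2) * x) := by rw [hK_def]; ring
  have hexpint : IntegrableOn (fun x => K * Real.exp (-(c / 2) * x)) (Ioi (9 * t0)) :=
    (exp_neg_integrableOn_Ioi _ hc2).const_mul K
  have htail1 : ∫ x in Ioi (9 * t0), |x| ^ q * f x
      ≤ ∫ x in Ioi (9 * t0), K * Real.exp (-(c / 2) * x) :=
    setIntegral_mono_on hintq.integrableOn hexpint measurableSet_Ioi hpt
  have htail2 : ∫ x in Ioi (9 * t0), K * Real.exp (-(c / 2) * x)
      = K * ((c / 2)⁻¹ * Real.exp (-(c / 2 * (9 * t0)))) := by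
    rw [integral_const_mul]
    congr 1
    have h0 := integral_comp_mul_left_Ioi (fun u => Real.exp (-u)) (9 * t0) hc2
    simp only [smul_eq_mul] at h0
    rw [integral_exp_neg_Ioi] at h0
    have h1 : (fun x => Real.exp (-(c / 2) * x)) = (fun x => Real.exp (-(c / 2 * x))) := by
      funext u
      rw [neg_mul]
    rw [h1, h0]
  -- scalar computation
  have hct : c * t0 = p / 10 := by
    rw [hc_def]
    field_simp
  have hcinv : (c / 2)⁻¹ = 20 * t0 / p := by
    rw [hc_def, div_div, inv_div]
    ring
  have hee : Real.exp (9 * c * t0) * Real.exp (-(c / 2 * (9 * t0))) = Real.exp (9 / 20 * p) := by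
    rw [← Real.exp_add]
    congr 1
    have h1 : 9 * c * t0 + -(c / 2 * (9 * t0)) = 9 / 2 * (c * t0) := by ring
    rw [h1, hct]
    ring
  have hSle : Real.exp (-p) / (8 * t0) * (20 * t0 / p * Real.exp (9 / 20 * p)) ≤ 5 / 2 := by
    have h1 : Real.exp (-p) * Real.exp (9 / 20 * p) = Real.exp (-(11 / 20) * p) := by
      rw [← Real.exp_add]
      congr 1
      ring
    have h2 : Real.exp (-p) / (8 * t0) * (20 * t0 / p * Real.exp (9 / 20 * p))
        = 5 / (2 * p) * (Real.exp (-p) * Real.exp (9 / 20 * p)) := by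
      field_simp
      ring
    rw [h2, h1]
    have h3 : Real.exp (-(11 / 20) * p) ≤ 1 := Real.exp_le_one_iff.mpr (by nlinarith)
    have h4 : 5 / (2 * p) ≤ 5 / 2 := by
      rw [div_le_div_iff₀ (by positivity) (by norm_num)]
      nlinarith
    calc 5 / (2 * p) * Real.exp (-(11 / 20) * p) ≤ 5 / (2 * p) * 1 :=
          mul_le_mul_of_nonneg_left h3 (by positivity)
      _ = 5 / (2 * p) := mul_one _
      _ ≤ 5 / 2 := h4
  have hBle : B ≤ 9 * (q / p) * t0 := by
    rw [hB_def, hc_def, div_le_iff₀ (by positivity)]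
    have h1 : 9 * (q / p) * t0 * (Real.exp 1 * (p / (10 * t0) / 2)) = 9 / 20 * Real.exp 1 * q := by
      field_simp
      ring
    rw [h1]
    nlinarith [he1, hq0]
  have hBq : B ^ q ≤ (9 * (q / p) * t0) ^ q := Real.rpow_le_rpow hB0.le hBle hq0.le
  have htail3 : K * ((c / 2)⁻¹ * Real.exp (-(c / 2 * (9 * t0)))) ≤ 5 / 2 * (9 * (q / p) * t0) ^ q := by
    have h1 : K * ((c / 2)⁻¹ * Real.exp (-(c / 2 * (9 * t0))))
        = B ^ q * (Real.exp (-p) / (8 * t0)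
            * ((c / 2)⁻¹ * (Real.exp (9 * c * t0) * Real.exp (-(c / 2 * (9 * t0)))))) := by
      rw [hK_def]
      ring
    rw [h1, hcinv, hee]
    calc B ^ q * (Real.exp (-p) / (8 * t0) * (20 * t0 / p * Real.exp (9 / 20 * p)))
        ≤ (9 * (q / p) * t0) ^ q * (5 / 2) :=
          mul_le_mul hBq hSle (by positivity) (Real.rpow_nonneg (by positivity) q)
      _ = 5 / 2 * (9 * (q / p) * t0) ^ q := mul_comm _ _
  -- combine
  have hqp1 : (1:ℝ) ≤ q / p := (one_le_div hp0).mpr hpq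
  have h9a : (9 * t0 : ℝ) ≤ 9 * (q / p) * t0 := by nlinarith [ht0]
  have h9q : (9 * t0) ^ q ≤ (9 * (q / p) * t0) ^ q :=
    Real.rpow_le_rpow (by positivity) h9a hq0.le
  have hmp0 : 0 < m ^ (1 / p) := Real.rpow_pos_of_pos hm _
  have hY : 9 * (q / p) * t0 ≤ 25 * (q / p) * m ^ (1 / p) := by
    rw [ht0_def]
    have he2 : Real.exp 1 < 2.7182818286 := Real.exp_one_lt_d9
    nlinarith [mul_pos (div_pos hq0 hp0) hmp0, hqp1]
  have hYq : (9 * (q / p) * t0) ^ q ≤ (25 * (q / p) * m ^ (1 / p)) ^ q :=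
    Real.rpow_le_rpow (by positivity) hY hq0.le
  have hXq0 : 0 ≤ (9 * (q / p) * t0) ^ q := Real.rpow_nonneg (by positivity) q
  linarith [htail1, htail2 ▸ htail1, htail3, hhead, h9q, hYq, hXq0]

set_option maxHeartbeats 1000000 in
theorem stmt3 :
    ∃ C : ℝ, 0 < C ∧
      ∀ f : ℝ → ℝ, (∀ x, 0 ≤ f x) → Measurable f →
        (∫ x, f x = 1) →
        (∀ x y a b : ℝ, 0 ≤ a → 0 ≤ b → a + b = 1 →
          f x ^ a * f y ^ b ≤ f (a * x + b * y)) →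
        (∀ p : ℝ, 1 ≤ p → Integrable (fun x => |x| ^ p * f x)) →
        (∫ x, x * f x = 0) →
        ∀ p q : ℝ, 1 ≤ p → p ≤ q →
          (∫ x, |x| ^ q * f x) ^ (1 / q)
            ≤ C * (q / p) * (∫ x, |x| ^ p * f x) ^ (1 / p) := by
  refine ⟨1000, by norm_num, ?_⟩
  intro f hnn hmeas hf1 hlc hmom _hmean p q hp hpq
  have hp0 : 0 < p := lt_of_lt_of_le one_pos hp
  have hq1 : 1 ≤ q := hp.trans hpq
  have hq0 : 0 < q := lt_of_lt_of_le one_pos hq1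
  have hint : Integrable f := by
    by_contra hcon
    rw [integral_undef hcon] at hf1
    norm_num at hf1
  have hmnn : ∀ x : ℝ, 0 ≤ |x| ^ p * f x :=
    fun x => mul_nonneg (Real.rpow_nonneg (abs_nonneg x) p) (hnn x)
  have hqnn : ∀ x : ℝ, 0 ≤ |x| ^ q * f x :=
    fun x => mul_nonneg (Real.rpow_nonneg (abs_nonneg x) q) (hnn x)
  set m : ℝ := ∫ x, |x| ^ p * f x with hm_def
  have hm0 : 0 ≤ m := integral_nonneg hmnn
  have hm : 0 < m := by
    rcases eq_or_lt_of_le hm0 with h | h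
    · exfalso
      have h1 : (fun x => |x| ^ p * f x) =ᵐ[volume] 0 :=
        (integral_eq_zero_iff_of_nonneg hmnn (hmom p hp)).mp h.symm
      have h2 : ∀ᵐ x : ℝ, x ≠ 0 := by
        have : volume ({0} : Set ℝ) = 0 := Real.volume_singleton
        rw [ae_iff]
        convert this using 2
        ext x
        simp
      have h3 : f =ᵐ[volume] 0 := by
        filter_upwards [h1, h2] with x hx1 hx2
        have hpos : 0 < |x| ^ p := Real.rpow_pos_of_pos (abs_pos.mpr hx2) p
        have : |x| ^ p * f x = 0 := hx1
        simpa [hpos.ne'] using mul_eq_zero.mp this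
      rw [integral_congr_ae h3] at hf1
      simp at hf1
    · exact h
  -- reflected function
  set g : ℝ → ℝ := fun x => f (-x) with hg_def
  have hgnn : ∀ x, 0 ≤ g x := fun x => hnn (-x)
  have hgmeas : Measurable g := hmeas.comp measurable_neg
  have hgint : Integrable g := hint.comp_neg
  have hgf1 : ∫ x, g x = 1 := by rw [hg_def, integral_neg_eq_self f volume, hf1]
  have hglc : ∀ x y a b : ℝ, 0 ≤ a → 0 ≤ b → a + b = 1 →
      g x ^ a * g y ^ b ≤ g (a * x + b * y) := by
    intro x y a b ha hb hab
    have h := hlc (-x) (-y) a b ha hb hab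
    rw [show a * -x + b * -y = -(a * x + b * y) by ring] at h
    exact h
  have hgmom : ∀ r : ℝ, 1 ≤ r → Integrable (fun x => |x| ^ r * g x) := by
    intro r hr
    have h1 : Integrable (fun x => |(-x)| ^ r * f (-x)) := (hmom r hr).comp_neg
    simpa [abs_neg] using h1
  have hgm : ∫ x, |x| ^ p * g x = m := by
    rw [hm_def, ← integral_neg_eq_self (fun x => |x| ^ p * f x) volume]
    simp [hg_def, abs_neg]
  have hside1 := aux_oneside f hnn hmeas hint hf1 hlc hmom p q hp hpq hm
  have hside2 := aux_oneside g hgnn hgmeas hgint hgf1 hglc hgmom p q hp hpq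
    (by rw [hgm]; exact hm)
  rw [hgm] at hside2
  -- negative part equals reflected positive part
  have hneg : ∫ x in Iio (0:ℝ), |x| ^ q * f x = ∫ x in Ici (0:ℝ), |x| ^ q * g x := by
    have h1 : ∫ x in Ioi (0:ℝ), |(-x)| ^ q * f (-x) = ∫ x in Iic (-(0:ℝ)), |x| ^ q * f x :=
      integral_comp_neg_Ioi 0 (fun x => |x| ^ q * f x)
    have h2 : ∫ x in Ioi (0:ℝ), |x| ^ q * g x = ∫ x in Ioi (0:ℝ), |(-x)| ^ q * f (-x) := by
      apply setIntegral_congr_fun measurableSet_Ioi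
      intro x _
      simp [hg_def, abs_neg]
    have h3 : ∫ x in Iio (0:ℝ), |x| ^ q * f x = ∫ x in Iic (-(0:ℝ)), |x| ^ q * f x := by
      rw [neg_zero]
      exact setIntegral_congr_set Iio_ae_eq_Iic
    have h4 : ∫ x in Ioi (0:ℝ), |x| ^ q * g x = ∫ x in Ici (0:ℝ), |x| ^ q * g x :=
      setIntegral_congr_set Ioi_ae_eq_Ici
    rw [h3, ← h1, ← h2, h4]
  -- total bound
  set Y : ℝ := 25 * (q / p) * m ^ (1 / p) with hY_def
  have hY0' : 0 ≤ (q / p) * m ^ (1 / p) :=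
    mul_nonneg (div_nonneg hq0.le hp0.le) (Real.rpow_nonneg hm0 _)
  have hY0 : 0 ≤ Y := by rw [hY_def, mul_assoc]; positivity
  have hsum : ∫ x, |x| ^ q * f x ≤ 8 * Y ^ q := by
    rw [← integral_add_compl (measurableSet_Ici (a := (0:ℝ))) (hmom q hq1), compl_Ici, hneg]
    rw [hY_def]
    linarith [hside1, hside2]
  have hmq0 : 0 ≤ ∫ x, |x| ^ q * f x := integral_nonneg hqnn
  have h1 : (∫ x, |x| ^ q * f x) ^ (1 / q) ≤ (8 * Y ^ q) ^ (1 / q) :=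
    Real.rpow_le_rpow hmq0 hsum (by positivity)
  have h2 : (8 * Y ^ q) ^ (1 / q) = 8 ^ (1 / q) * Y := by
    rw [Real.mul_rpow (by norm_num) (Real.rpow_nonneg hY0 q), ← Real.rpow_mul hY0,
      mul_one_div, div_self hq0.ne', Real.rpow_one]
  have h3 : (8 : ℝ) ^ (1 / q) ≤ 8 := by
    calc (8:ℝ) ^ (1 / q) ≤ 8 ^ (1:ℝ) :=
          Real.rpow_le_rpow_of_exponent_le (by norm_num)
            (by rw [div_le_one hq0]; exact hq1)
      _ = 8 := Real.rpow_one 8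
  have h4 : (8:ℝ) ^ (1 / q) * Y ≤ 8 * Y := mul_le_mul_of_nonneg_right h3 hY0
  have h5 : 8 * Y = 200 * ((q / p) * m ^ (1 / p)) := by rw [hY_def]; ring
  calc (∫ x, |x| ^ q * f x) ^ (1 / q) ≤ (8 * Y ^ q) ^ (1 / q) := h1
    _ = 8 ^ (1 / q) * Y := h2
    _ ≤ 8 * Y := h4
    _ = 200 * ((q / p) * m ^ (1 / p)) := h5
    _ ≤ 1000 * ((q / p) * m ^ (1 / p)) := by linarith [hY0']
    _ = 1000 * (q / p) * m ^ (1 / p) := by ring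
end

section
/- For 0 < q ≤ n/2, the ratio 2^{-q/2} Γ((n-q)/2) / Γ(n/2) satisfies (c/√n)^q ≤ 2^{-q/2} Γ((n-q)/2)/Γ(n/2) ≤ (C/√n)^q for absolute constants c, C > 0. -/
open Real

lemma wendelA (x s : ℝ) (hx : 0 < x) (hs0 : 0 ≤ s) (hs1 : s ≤ 1) :
    Gamma (x + s) ≤ Gamma x * x ^ s := by
  have hx1 : (0:ℝ) < x + 1 := by linarith
  have hxs : (0:ℝ) < x + s := by linarith
  have hconv := Real.convexOn_log_Gamma.2 (Set.mem_Ioi.mpr hx) (Set.mem_Ioi.mpr hx1)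
      (by linarith : (0:ℝ) ≤ 1 - s) hs0 (by ring)
  simp only [Function.comp] at hconv
  have hc : (1 - s) • x + s • (x + 1) = x + s := by simp [smul_eq_mul]; ring
  rw [hc] at hconv
  have hGx : 0 < Gamma x := Gamma_pos_of_pos hx
  have hGx1 : 0 < Gamma (x + 1) := Gamma_pos_of_pos hx1
  have hGxs : 0 < Gamma (x + s) := Gamma_pos_of_pos hxs
  have := Real.exp_le_exp.mpr hconv
  rw [Real.exp_log hGxs] at this
  calc Gamma (x + s) ≤ Real.exp ((1 - s) • Real.log (Gamma x) + s • Real.log (Gamma (x + 1))) := this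
    _ = Gamma x ^ (1 - s : ℝ) * Gamma (x + 1) ^ (s : ℝ) := by
        rw [Real.exp_add, smul_eq_mul, smul_eq_mul, mul_comm (1-s), mul_comm s,
          ← Real.rpow_def_of_pos hGx, ← Real.rpow_def_of_pos hGx1]
    _ = Gamma x * x ^ s := by
        rw [Real.Gamma_add_one (ne_of_gt hx), Real.mul_rpow hx.le hGx.le,
          show Gamma x ^ (1 - s : ℝ) * (x ^ s * Gamma x ^ s)
              = Gamma x ^ (1 - s : ℝ) * Gamma x ^ s * x ^ s from by ring,
          ← Real.rpow_add hGx]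
        norm_num

lemma wendelB (x s : ℝ) (hx : 0 < x) (hs0 : 0 ≤ s) (hs1 : s ≤ 1)
    (hA : ∀ y t : ℝ, 0 < y → 0 ≤ t → t ≤ 1 → Gamma (y + t) ≤ Gamma y * y ^ t) :
    Gamma x * x ≤ Gamma (x + s) * (x + s) ^ (1 - s : ℝ) := by
  have hxs : (0:ℝ) < x + s := by linarith
  have h := hA (x + s) (1 - s) hxs (by linarith) (by linarith)
  have he : x + s + (1 - s) = x + 1 := by ring
  rw [he, Real.Gamma_add_one (ne_of_gt hx)] at h
  linarith [h]

-- Upper: Γ(x+a) ≤ Γ x * (x+a)^a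
lemma claimL (k : ℕ) : ∀ a : ℝ, 0 ≤ a → a ≤ k → ∀ x : ℝ, 0 < x →
    Gamma (x + a) ≤ Gamma x * (x + a) ^ a := by
  induction k with
  | zero =>
    intro a ha0 hak x hx
    have : a = 0 := le_antisymm (by simpa using hak) ha0
    simp [this]
  | succ k ih =>
    intro a ha0 hak x hx
    by_cases h1 : a ≤ 1
    · calc Gamma (x + a) ≤ Gamma x * x ^ a := wendelA x a hx ha0 h1
        _ ≤ Gamma x * (x + a) ^ a :=
          mul_le_mul_of_nonneg_left
            (Real.rpow_le_rpow hx.le (by linarith) ha0)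
            (Gamma_pos_of_pos hx).le
    · push_neg at h1
      have ha1 : (0:ℝ) ≤ a - 1 := by linarith
      have hak' : a - 1 ≤ k := by push_cast at hak ⊢; linarith
      have hxa1 : 0 < x + (a - 1) := by linarith
      have key := ih (a - 1) ha1 hak' x hx
      have heq : Gamma (x + a) = (x + (a - 1)) * Gamma (x + (a - 1)) := by
        rw [show x + a = x + (a - 1) + 1 from by ring,
          Real.Gamma_add_one (ne_of_gt hxa1)]
      rw [heq]
      have h2 : (x + (a-1)) * Gamma (x + (a - 1)) ≤ (x + (a-1)) * (Gamma x * (x + (a-1)) ^ (a-1)) :=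
        mul_le_mul_of_nonneg_left key hxa1.le
      have split : (x + (a-1)) ^ a = (x + (a-1)) ^ (a-1:ℝ) * (x + (a-1)) := by
        nth_rewrite 3 [← Real.rpow_one (x + (a-1))]
        rw [← Real.rpow_add hxa1]; ring_nf
      have h3 : (x + (a-1)) * (Gamma x * (x + (a-1)) ^ (a-1)) = Gamma x * (x + (a-1)) ^ a := by
        rw [split]; ring
      have h4 : Gamma x * (x + (a-1)) ^ a ≤ Gamma x * (x + a) ^ a :=
        mul_le_mul_of_nonneg_left
          (Real.rpow_le_rpow hxa1.le (by linarith) ha0) (Gamma_pos_of_pos hx).le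
      linarith

noncomputable def Kc : ℝ := 2 * Real.exp 4

lemma Kc_pos : 0 < Kc := by unfold Kc; positivity

-- Lower: Γ x * (x+a)^a ≤ Γ(x+a) * Kc^a  for x ≥ 1/4
lemma claimD (k : ℕ) : ∀ a : ℝ, 0 ≤ a → a ≤ k → ∀ x : ℝ, 1/4 ≤ x →
    Gamma x * (x + a) ^ a ≤ Gamma (x + a) * Kc ^ a := by
  induction k with
  | zero =>
    intro a ha0 hak x hx
    have : a = 0 := le_antisymm (by simpa using hak) ha0
    simp [this]
  | succ k ih =>
    intro a ha0 hak x hx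
    have hx0 : (0:ℝ) < x := by linarith
    have hxa : (0:ℝ) < x + a := by linarith
    by_cases h1 : a ≤ 1
    · -- base: Γx * x ≤ Γ(x+a) * (x+a)^(1-a), and (x+a)/x ≤ e^(4a) ≤ Kc^a
      have hB := wendelB x a hx0 ha0 h1 (fun y t hy ht0 ht1 => wendelA y t hy ht0 ht1)
      -- Γx * (x+a)^a = (Γx * x) * (x+a)^a / x ≤ Γ(x+a)*(x+a)^(1-a)*(x+a)^a/x
      --             = Γ(x+a)*(x+a)/x
      have hGxa : 0 < Gamma (x + a) := Gamma_pos_of_pos hxa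
      have step1 : Gamma x * (x + a) ^ a ≤ Gamma (x + a) * (x + a) / x := by
        have h2 : Gamma x * x * (x + a) ^ a ≤ Gamma (x + a) * (x + a) ^ (1 - a : ℝ) * (x + a) ^ a :=
          mul_le_mul_of_nonneg_right hB (Real.rpow_nonneg hxa.le a)
        have h3 : Gamma (x + a) * (x + a) ^ (1 - a : ℝ) * (x + a) ^ a = Gamma (x + a) * (x + a) := by
          rw [mul_assoc, ← Real.rpow_add hxa]
          norm_num
        rw [h3] at h2
        rw [div_eq_mul_inv, ← mul_le_mul_iff_of_pos_right hx0, mul_assoc, mul_assoc,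
          inv_mul_cancel₀ (ne_of_gt hx0), mul_one]
        nlinarith [h2]
      have step2 : Gamma (x + a) * (x + a) / x ≤ Gamma (x + a) * Kc ^ a := by
        rw [mul_div_assoc]
        apply mul_le_mul_of_nonneg_left _ hGxa.le
        rw [div_le_iff₀ hx0] at *
        have e1 : x + a ≤ x * Real.exp (4 * a) := by
          have : 1 + 4 * a ≤ Real.exp (4 * a) := by
            have := Real.add_one_le_exp (4 * a); linarith
          nlinarith
        have e2 : Real.exp (4 * a) ≤ Kc ^ a := by
          have he : Real.exp (4 * a) = (Real.exp 4) ^ a := by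
            rw [Real.rpow_def_of_pos (Real.exp_pos 4), Real.log_exp]
          rw [he]
          exact Real.rpow_le_rpow (Real.exp_pos 4).le (by unfold Kc; nlinarith [Real.exp_pos 4]) ha0
        calc x + a ≤ x * Real.exp (4*a) := e1
          _ ≤ x * Kc ^ a := by nlinarith [Real.exp_pos (4*a)]
          _ = Kc ^ a * x := mul_comm _ _
      linarith
    · push_neg at h1
      have ha1 : (0:ℝ) ≤ a - 1 := by linarith
      have hak' : a - 1 ≤ k := by push_cast at hak ⊢; linarith
      have hy : (1:ℝ)/4 ≤ x := hx
      have key := ih (a - 1) ha1 hak' x hx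
      have hxa1 : (0:ℝ) < x + (a - 1) := by linarith
      have heq : Gamma (x + a) = (x + (a - 1)) * Gamma (x + (a - 1)) := by
        rw [show x + a = x + (a - 1) + 1 from by ring,
          Real.Gamma_add_one (ne_of_gt hxa1)]
      -- need: Γx * (x+a)^a ≤ (x+(a-1)) * Γ(x+(a-1)) * Kc^a
      -- have: Γx * (x+(a-1))^(a-1) ≤ Γ(x+(a-1)) * Kc^(a-1)
      -- suffices: (x+a)^a ≤ (x+(a-1))^a * Kc  [then combine]
      have hpow : (x + a) ^ a ≤ (x + (a-1)) ^ a * Real.exp 4 := by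
        set y := x + (a - 1) with hy'
        have hy0 : 0 < y := hxa1
        have h5 : x + a = y * (1 + 1/y) := by
          field_simp
          linarith [hy']
        have h6 : (1:ℝ) + 1/y ≤ Real.exp (1/y) := by
          have := Real.add_one_le_exp (1/y); linarith
        have h7 : (x + a) ^ a ≤ (y * Real.exp (1/y)) ^ a := by
          apply Real.rpow_le_rpow hxa.le _ ha0
          rw [h5]
          nlinarith [Real.exp_pos (1/y)]
        have h8 : (y * Real.exp (1/y)) ^ a = y ^ a * Real.exp (1/y) ^ a :=
          Real.mul_rpow hy0.le (Real.exp_pos _).le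
        have h9 : Real.exp (1/y) ^ a = Real.exp (a / y) := by
          rw [Real.rpow_def_of_pos (Real.exp_pos _), Real.log_exp]
          congr 1; ring
        have h10 : a / y ≤ 4 := by
          rw [div_le_iff₀ hy0]
          have : (1:ℝ)/4 ≤ x := hx
          nlinarith
        have h11 : Real.exp (a/y) ≤ Real.exp 4 := Real.exp_le_exp.mpr h10
        calc (x + a) ^ a ≤ y ^ a * Real.exp (1/y) ^ a := by rw [← h8]; exact h7
          _ = y ^ a * Real.exp (a/y) := by rw [h9]
          _ ≤ y ^ a * Real.exp 4 :=
              mul_le_mul_of_nonneg_left h11 (Real.rpow_nonneg hy0.le a)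
      have hGx : 0 < Gamma x := Gamma_pos_of_pos hx0
      have split : (x + (a-1)) ^ a = (x + (a-1)) ^ (a - 1 : ℝ) * (x + (a-1)) := by
        nth_rewrite 3 [← Real.rpow_one (x + (a-1))]
        rw [← Real.rpow_add hxa1]; ring_nf
      have hKc1 : Kc ^ a = Kc ^ (a - 1 : ℝ) * Kc := by
        nth_rewrite 3 [← Real.rpow_one Kc]
        rw [← Real.rpow_add Kc_pos]; ring_nf
      have main : Gamma x * (x + (a-1)) ^ a * Real.exp 4
          ≤ Gamma (x + a) * Kc ^ a := by
        rw [heq, split, hKc1]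
        have t1 : Gamma x * ((x + (a-1)) ^ (a-1:ℝ) * (x + (a-1))) * Real.exp 4
            = (Gamma x * (x + (a-1)) ^ (a-1:ℝ)) * ((x + (a-1)) * Real.exp 4) := by ring
        rw [t1]
        have t2 : (Gamma x * (x + (a-1)) ^ (a-1:ℝ)) * ((x + (a-1)) * Real.exp 4)
            ≤ (Gamma (x + (a-1)) * Kc ^ (a-1:ℝ)) * ((x + (a-1)) * Real.exp 4) := by
          apply mul_le_mul_of_nonneg_right key
          positivity
        have hKe : Real.exp 4 ≤ Kc := by unfold Kc; nlinarith [Real.exp_pos 4]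
        have hG1 : 0 < Gamma (x + (a-1)) := Gamma_pos_of_pos hxa1
        have hK1 : 0 < Kc ^ (a-1:ℝ) := Real.rpow_pos_of_pos Kc_pos _
        have t3 : Gamma (x + (a-1)) * Kc ^ (a-1:ℝ) * ((x + (a-1)) * Real.exp 4)
            ≤ (x + (a-1)) * Gamma (x + (a-1)) * (Kc ^ (a-1:ℝ) * Kc) := by
          nlinarith [mul_nonneg (mul_nonneg (mul_nonneg hG1.le hK1.le) hxa1.le)
            (sub_nonneg.mpr hKe)]
        linarith
      calc Gamma x * (x + a) ^ a ≤ Gamma x * ((x + (a-1)) ^ a * Real.exp 4) :=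
            mul_le_mul_of_nonneg_left hpow hGx.le
        _ = Gamma x * (x + (a-1)) ^ a * Real.exp 4 := by ring
        _ ≤ Gamma (x + a) * Kc ^ a := main

theorem stmt5 :
    ∃ c C : ℝ, 0 < c ∧ 0 < C ∧
      ∀ (n : ℕ) (q : ℝ), 0 < q → q ≤ (n : ℝ) / 2 →
        (c / Real.sqrt n) ^ q
            ≤ (2 : ℝ) ^ (-q / 2) * Real.Gamma (((n : ℝ) - q) / 2) / Real.Gamma ((n : ℝ) / 2) ∧
          (2 : ℝ) ^ (-q / 2) * Real.Gamma (((n : ℝ) - q) / 2) / Real.Gamma ((n : ℝ) / 2)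
            ≤ (C / Real.sqrt n) ^ q := by
  refine ⟨1, Kc ^ (1/2 : ℝ), one_pos, Real.rpow_pos_of_pos Kc_pos _, ?_⟩
  intro n q hq hqn
  set N : ℝ := (n : ℝ) with hN
  have hN0 : 0 < N := by linarith
  set x : ℝ := (N - q) / 2 with hxdef
  set a : ℝ := q / 2 with hadef
  have ha0 : 0 ≤ a := by positivity
  have hn1 : (1:ℝ) ≤ N := by
    rw [hN]
    exact_mod_cast Nat.one_le_iff_ne_zero.mpr
      (Nat.pos_iff_ne_zero.mp (Nat.cast_pos.mp (hN ▸ hN0)))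
  have hx14 : (1:ℝ)/4 ≤ x := by
    rw [hxdef]; linarith
  have hx0 : 0 < x := lt_of_lt_of_le (by norm_num) hx14
  have hxa : x + a = N / 2 := by rw [hxdef, hadef]; ring
  have hGN : 0 < Gamma (N / 2) := Gamma_pos_of_pos (by positivity)
  have hGx : 0 < Gamma x := Gamma_pos_of_pos hx0
  have hL := claimL ⌈a⌉₊ a ha0 (Nat.le_ceil a) x hx0
  have hD := claimD ⌈a⌉₊ a ha0 (Nat.le_ceil a) x hx14
  rw [hxa] at hL hD
  -- key exponent identity
  have hpos2 : (0:ℝ) < (2:ℝ) ^ (-q/2) := Real.rpow_pos_of_pos two_pos _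
  have hNq2 : (0:ℝ) < (N/2 : ℝ) ^ (a : ℝ) := Real.rpow_pos_of_pos (by positivity) _
  have hNq2' : (0:ℝ) < (N/2 : ℝ) ^ (-a : ℝ) := Real.rpow_pos_of_pos (by positivity) _
  have Emul : (2:ℝ) ^ (-q/2) * (N/2) ^ (-a : ℝ) = N ^ (-a : ℝ) := by
    have h1 : (-q/2 : ℝ) = -a := by rw [hadef]; ring
    rw [h1, ← Real.mul_rpow (by norm_num) (by positivity),
      show (2:ℝ) * (N/2) = N from by ring]
  have Ecancel : (N/2 : ℝ) ^ (a:ℝ) * (N/2) ^ (-a : ℝ) = 1 := by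
    rw [← Real.rpow_add (by positivity)]; simp
  constructor
  · -- lower bound
    have S1 : ((1:ℝ)/Real.sqrt N) ^ q = N ^ (-a : ℝ) := by
      rw [one_div, Real.sqrt_eq_rpow, ← Real.rpow_neg_one (N ^ (1/2 : ℝ)),
        ← Real.rpow_mul hN0.le, ← Real.rpow_mul hN0.le]
      rw [hadef, show (1/2:ℝ) * -1 * q = -(q/2) from by ring]
    rw [S1, le_div_iff₀ hGN]
    -- goal : N^(-a) * Γ(N/2) ≤ 2^(-q/2) * Γ x
    rw [← Emul, mul_assoc]
    apply mul_le_mul_of_nonneg_left _ hpos2.le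
    -- (N/2)^(-a) * Γ(N/2) ≤ Γ x
    calc (N/2 : ℝ) ^ (-a:ℝ) * Gamma (N/2)
        ≤ (N/2 : ℝ) ^ (-a:ℝ) * (Gamma x * (N/2) ^ (a:ℝ)) :=
          mul_le_mul_of_nonneg_left hL hNq2'.le
      _ = Gamma x * ((N/2 : ℝ) ^ (a:ℝ) * (N/2) ^ (-a:ℝ)) := by ring
      _ = Gamma x := by rw [Ecancel, mul_one]
  · -- upper bound
    have hC0 : (0:ℝ) < Kc ^ (1/2 : ℝ) := Real.rpow_pos_of_pos Kc_pos _
    have hsN : 0 < Real.sqrt N := Real.sqrt_pos.mpr hN0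
    have S2 : (Kc ^ (1/2 : ℝ) / Real.sqrt N) ^ q = Kc ^ (a:ℝ) * N ^ (-a : ℝ) := by
      rw [Real.div_rpow hC0.le hsN.le, Real.sqrt_eq_rpow,
        ← Real.rpow_mul Kc_pos.le, ← Real.rpow_mul hN0.le, div_eq_mul_inv,
        ← Real.rpow_neg_one (N ^ ((1/2 : ℝ) * q)), ← Real.rpow_mul hN0.le]
      rw [hadef, show (1/2:ℝ) * q = q/2 from by ring,
        show (q/2:ℝ) * -1 = -(q/2) from by ring]
    rw [S2, div_le_iff₀ hGN]
    -- goal : 2^(-q/2) * Γ x ≤ Kc^a * N^(-a) * Γ(N/2)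
    rw [← Emul]
    -- From hD : Γ x * (N/2)^a ≤ Γ(N/2) * Kc^a
    have key : Gamma x ≤ Gamma (N/2) * Kc ^ (a:ℝ) * (N/2) ^ (-a:ℝ) := by
      have := mul_le_mul_of_nonneg_right hD hNq2'.le
      calc Gamma x = Gamma x * ((N/2:ℝ) ^ (a:ℝ) * (N/2) ^ (-a:ℝ)) := by
            rw [Ecancel, mul_one]
        _ = Gamma x * (N/2:ℝ) ^ (a:ℝ) * (N/2) ^ (-a:ℝ) := by ring
        _ ≤ Gamma (N/2) * Kc ^ (a:ℝ) * (N/2) ^ (-a:ℝ) := this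
    calc (2:ℝ) ^ (-q/2) * Gamma x
        ≤ (2:ℝ) ^ (-q/2) * (Gamma (N/2) * Kc ^ (a:ℝ) * (N/2) ^ (-a:ℝ)) :=
          mul_le_mul_of_nonneg_left key hpos2.le
      _ = Kc ^ (a:ℝ) * ((2:ℝ) ^ (-q/2) * (N/2) ^ (-a:ℝ)) * Gamma (N/2) := by ring
end

section
/- Let X be a random vector in ℝⁿ, β > 0, ε₀ ∈ (0,1), and L > 0, and suppose P(|X| ≤ ε√n·L) ≤ ε^{βn} for all 0 < ε < ε₀. Then for every 1 ≤ q ≤ βn/2 one has E|X|^{-q} ≤ (C_{ε₀,β}/(√n·L))^q, i.e. I_{-q} := (E|X|^{-q})^{-1/q} ≥ c·√n·L, where the constant depends only on ε₀ and β. -/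
open MeasureTheory Real Set

theorem stmt6 (ε₀ β : ℝ) (hε₀ : 0 < ε₀) (hε₀1 : ε₀ < 1) (hβ : 0 < β) :
    ∃ C : ℝ, 0 < C ∧
      ∀ (n : ℕ) (L : ℝ), 0 < L →
        ∀ (Ω : Type) (_ : MeasurableSpace Ω) (μ : Measure Ω), IsProbabilityMeasure μ →
          ∀ (X : Ω → EuclideanSpace ℝ (Fin n)), Measurable X →
            (∀ ε : ℝ, 0 < ε → ε < ε₀ →
              (μ {ω | ‖X ω‖ ≤ ε * Real.sqrt n * L}).toReal ≤ ε ^ (β * n)) →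
            ∀ q : ℝ, 1 ≤ q → q ≤ β * n / 2 →
              ∫ ω, ‖X ω‖ ^ (-q) ∂μ ≤ (C / (Real.sqrt n * L)) ^ q := by
  classical
  refine ⟨4 / ε₀, by positivity, ?_⟩
  intro n L hL Ω mΩ μ hμ X hX hsb q hq1 hq2
  have hn0 : n ≠ 0 := by
    rintro rfl
    simp only [Nat.cast_zero, mul_zero, zero_div] at hq2
    linarith
  have hn1 : (1 : ℝ) ≤ (n : ℝ) := by exact_mod_cast Nat.one_le_iff_ne_zero.mpr hn0
  have hq0 : 0 < q := by linarith
  have hβn : q + 1 ≤ β * n := by linarith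
  set s : ℝ := Real.sqrt n * L with hs_def
  have hs : 0 < s := mul_pos (Real.sqrt_pos.mpr (by linarith)) hL
  set a : ℝ := ε₀ / 2 * s with ha_def
  have ha : 0 < a := by positivity
  have hgm : Measurable fun ω => ‖X ω‖ ^ (-q) := hX.norm.pow_const (-q)
  have hint : ∫ ω, ‖X ω‖ ^ (-q) ∂μ
      = (∫⁻ ω, ENNReal.ofReal (‖X ω‖ ^ (-q)) ∂μ).toReal :=
    integral_eq_lintegral_of_nonneg_ae
      (ae_of_all _ fun ω => Real.rpow_nonneg (norm_nonneg _) _) hgm.aestronglyMeasurable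
  set A : ℕ → Set Ω := fun k => (fun ω => ‖X ω‖) ⁻¹' Ioc (a / 2 ^ (k + 1)) (a / 2 ^ k) with hA
  have hAm : ∀ k, MeasurableSet (A k) := fun k => hX.norm measurableSet_Ioc
  set c : ℕ → ENNReal := fun k => ENNReal.ofReal ((a / 2 ^ (k + 1)) ^ (-q)) with hc
  -- pointwise bound
  have hpt : ∀ ω, ENNReal.ofReal (‖X ω‖ ^ (-q))
      ≤ ENNReal.ofReal (a ^ (-q)) + ∑' k, (A k).indicator (fun _ => c k) ω := by
    intro ω
    rcases eq_or_lt_of_le (norm_nonneg (X ω)) with h0 | h0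
    · rw [← h0, Real.zero_rpow (by linarith : -q ≠ 0)]
      simp
    rcases le_or_gt ‖X ω‖ a with hle | hgt
    · have ht1 : 1 ≤ a / ‖X ω‖ := (one_le_div h0).mpr hle
      obtain ⟨k, hk1, hk2⟩ := exists_nat_pow_near ht1 (one_lt_two (α := ℝ))
      have hmem : ω ∈ A k := by
        constructor
        · rw [div_lt_iff₀ (by positivity)]
          calc a = a / ‖X ω‖ * ‖X ω‖ := by field_simp
          _ < 2 ^ (k + 1) * ‖X ω‖ := by
              exact mul_lt_mul_of_pos_right hk2 h0
          _ = ‖X ω‖ * 2 ^ (k + 1) := by ring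
        · rw [le_div_iff₀ (by positivity)]
          calc ‖X ω‖ * 2 ^ k ≤ ‖X ω‖ * (a / ‖X ω‖) := by
                exact mul_le_mul_of_nonneg_left hk1 h0.le
          _ = a := by field_simp
      have h1 : ENNReal.ofReal (‖X ω‖ ^ (-q)) ≤ c k :=
        ENNReal.ofReal_le_ofReal
          (Real.rpow_le_rpow_of_nonpos (by positivity) hmem.1.le (by linarith))
      refine le_trans h1 (le_add_left ?_)
      have : c k = (A k).indicator (fun _ => c k) ω := (Set.indicator_of_mem hmem (fun _ => c k)).symm
      rw [this]
      exact ENNReal.le_tsum k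
    · refine le_trans (ENNReal.ofReal_le_ofReal
        (Real.rpow_le_rpow_of_nonpos ha hgt.le (by linarith))) le_self_add
  -- lintegral bound
  have h1 : ∫⁻ ω, ENNReal.ofReal (‖X ω‖ ^ (-q)) ∂μ
      ≤ ENNReal.ofReal (a ^ (-q)) + ∑' k, c k * μ (A k) := by
    refine le_trans (lintegral_mono hpt) ?_
    rw [lintegral_add_left measurable_const, lintegral_const, measure_univ, mul_one,
      lintegral_tsum (fun k => (measurable_const.indicator (hAm k)).aemeasurable)]
    refine add_le_add_right (le_of_eq ?_) _
    exact tsum_congr fun k => lintegral_indicator_const (hAm k) _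
  -- per-term bound
  have key : ∀ k : ℕ, (a / 2 ^ (k + 1)) ^ (-q) * (ε₀ / 2 ^ (k + 1)) ^ (β * n)
      ≤ a ^ (-q) * (1 / 2 : ℝ) ^ (k + 1) := by
    intro k
    set t : ℝ := 2 ^ (k + 1) with htdef
    have ht0 : (0 : ℝ) < t := by positivity
    have ht1 : (1 : ℝ) ≤ t := one_le_pow₀ one_le_two
    have e1 : (a / t) ^ (-q) = a ^ (-q) * t ^ q := by
      rw [Real.div_rpow ha.le ht0.le, Real.rpow_neg ht0.le, div_inv_eq_mul]
    have e2 : (ε₀ / t) ^ (β * n) = ε₀ ^ (β * n) / t ^ (β * n) :=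
      Real.div_rpow hε₀.le ht0.le _
    have e3 : (1 / 2 : ℝ) ^ (k + 1) = 1 / t := by
      rw [htdef, one_div, one_div, inv_pow]
    rw [e1, e2, e3]
    have hE : ε₀ ^ (β * n) ≤ 1 := Real.rpow_le_one hε₀.le hε₀1.le (by positivity)
    have hE0 : 0 < ε₀ ^ (β * n) := Real.rpow_pos_of_pos hε₀ _
    have h2 : t ^ q * t ≤ t ^ (β * (n : ℝ)) := by
      have := Real.rpow_le_rpow_of_exponent_le ht1 hβn
      rwa [Real.rpow_add ht0, Real.rpow_one] at this
    have hT : 0 < t ^ q := Real.rpow_pos_of_pos ht0 _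
    have hB : 0 < t ^ (β * (n : ℝ)) := Real.rpow_pos_of_pos ht0 _
    have hA0 : 0 < a ^ (-q) := Real.rpow_pos_of_pos ha _
    rw [mul_assoc, mul_le_mul_iff_right₀ hA0, mul_div_assoc', div_le_div_iff₀ hB ht0, one_mul]
    calc t ^ q * ε₀ ^ (β * n) * t ≤ t ^ q * 1 * t :=
          mul_le_mul_of_nonneg_right (mul_le_mul_of_nonneg_left hE hT.le) ht0.le
    _ = t ^ q * t := by ring
    _ ≤ t ^ (β * (n : ℝ)) := h2
  have h2 : ∀ k : ℕ, c k * μ (A k) ≤ ENNReal.ofReal (a ^ (-q) * (1 / 2 : ℝ) ^ (k + 1)) := by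
    intro k
    have hε : (0 : ℝ) < ε₀ / 2 ^ (k + 1) := by positivity
    have hεlt : ε₀ / 2 ^ (k + 1) < ε₀ := by
      apply div_lt_self hε₀
      exact one_lt_pow₀ one_lt_two (Nat.succ_ne_zero k)
    have hsub : A k ⊆ {ω | ‖X ω‖ ≤ (ε₀ / 2 ^ (k + 1)) * Real.sqrt n * L} := by
      intro ω hω
      have := hω.2
      have heq : a / 2 ^ k = ε₀ / 2 ^ (k + 1) * Real.sqrt n * L := by
        rw [ha_def, hs_def]
        field_simp
        ring
      simpa [Set.mem_setOf_eq, ← heq] using this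
    have hμA : μ (A k) ≤ ENNReal.ofReal ((ε₀ / 2 ^ (k + 1)) ^ (β * n)) := by
      refine le_trans (measure_mono hsub) ?_
      have hfin := measure_ne_top μ {ω | ‖X ω‖ ≤ (ε₀ / 2 ^ (k + 1)) * Real.sqrt n * L}
      rw [← ENNReal.ofReal_toReal hfin]
      exact ENNReal.ofReal_le_ofReal (hsb _ hε hεlt)
    calc c k * μ (A k) ≤ c k * ENNReal.ofReal ((ε₀ / 2 ^ (k + 1)) ^ (β * n)) :=
          mul_le_mul_right hμA _
    _ = ENNReal.ofReal ((a / 2 ^ (k + 1)) ^ (-q) * (ε₀ / 2 ^ (k + 1)) ^ (β * n)) :=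
          (ENNReal.ofReal_mul (Real.rpow_nonneg (by positivity) _)).symm
    _ ≤ ENNReal.ofReal (a ^ (-q) * (1 / 2 : ℝ) ^ (k + 1)) :=
          ENNReal.ofReal_le_ofReal (key k)
  have hsum : ∑' k : ℕ, ENNReal.ofReal (a ^ (-q) * (1 / 2 : ℝ) ^ (k + 1))
      = ENNReal.ofReal (a ^ (-q)) := by
    have hsummable : Summable fun k : ℕ => a ^ (-q) * (1 / 2 : ℝ) ^ (k + 1) := by
      apply Summable.mul_left
      exact (summable_geometric_of_lt_one (by norm_num) (by norm_num)).comp_injective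
        (add_left_injective 1)
    rw [← ENNReal.ofReal_tsum_of_nonneg (fun k => by positivity) hsummable]
    congr 1
    rw [tsum_mul_left]
    have : ∑' k : ℕ, ((1 : ℝ) / 2) ^ (k + 1) = 1 := by
      have := tsum_geometric_of_lt_one (by norm_num : (0:ℝ) ≤ 1/2) (by norm_num)
      calc ∑' k : ℕ, ((1 : ℝ) / 2) ^ (k + 1)
          = ∑' k : ℕ, (1 / 2 : ℝ) * (1 / 2) ^ k := by
            refine tsum_congr fun k => ?_
            rw [pow_succ]; ring
      _ = (1 / 2 : ℝ) * ∑' k : ℕ, ((1 : ℝ) / 2) ^ k := tsum_mul_left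
      _ = 1 := by rw [this]; norm_num
    rw [this, mul_one]
  have h3 : ∫⁻ ω, ENNReal.ofReal (‖X ω‖ ^ (-q)) ∂μ
      ≤ ENNReal.ofReal (a ^ (-q)) + ENNReal.ofReal (a ^ (-q)) := by
    refine h1.trans (add_le_add_right ?_ _)
    exact le_trans (ENNReal.tsum_le_tsum h2) (le_of_eq hsum)
  rw [hint]
  have hA0 : 0 ≤ a ^ (-q) := Real.rpow_nonneg ha.le _
  calc (∫⁻ ω, ENNReal.ofReal (‖X ω‖ ^ (-q)) ∂μ).toReal
      ≤ (ENNReal.ofReal (a ^ (-q)) + ENNReal.ofReal (a ^ (-q))).toReal := by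
        apply ENNReal.toReal_mono _ h3
        simp [ENNReal.add_ne_top]
  _ = 2 * a ^ (-q) := by
        rw [← ENNReal.ofReal_add hA0 hA0, ENNReal.toReal_ofReal (by linarith)]
        ring
  _ ≤ (4 / ε₀ / s) ^ q := by
        have hε₀' := hε₀.ne'
        have hs' := hs.ne'
        have heq : 4 / ε₀ / s = 2 / a := by
          rw [ha_def]
          field_simp
          ring
        have e4 : (2 / a) ^ q = 2 ^ q * a ^ (-q) := by
          rw [Real.div_rpow (by norm_num : (0:ℝ) ≤ 2) ha.le, Real.rpow_neg ha.le,
            div_eq_mul_inv]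
        rw [heq, e4]
        have h2q : (2 : ℝ) ≤ 2 ^ q := by
          have := Real.rpow_le_rpow_of_exponent_le (one_le_two (α := ℝ)) hq1
          rwa [Real.rpow_one] at this
        exact mul_le_mul_of_nonneg_right h2q hA0
end

section
/- Let K ⊂ ℝⁿ be a convex body of volume one (n ≥ 2), θ ∈ S^{n-1}, and R = sup_{x∈K} |⟨x,θ⟩|. Let X be uniform on K and X_θ = ⟨X,θ⟩. Then, after replacing θ by −θ if necessary so that R = sup supp X_θ, one has P(X_θ ≥ 0) ≥ 2^{-n} and P(X_θ ≥ R/2) ≥ 4^{-n}. -/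
open MeasureTheory Real Set
open scoped RealInnerProductSpace ENNReal Pointwise

theorem stmt11 (n : ℕ) (hn : 2 ≤ n) (K : Set (EuclideanSpace ℝ (Fin n)))
    (hKc : IsCompact K) (hKconv : Convex ℝ K) (hKint : (interior K).Nonempty)
    (hKvol : volume K = 1)
    (θ : EuclideanSpace ℝ (Fin n)) (hθ : ‖θ‖ = 1)
    (R : ℝ)
    (hR : R = sSup ((fun x => ⟪x, θ⟫) '' K))
    (hRabs : ∀ x ∈ K, |(⟪x, θ⟫)| ≤ R) :
    ((2 : ℝ≥0∞))⁻¹ ^ n ≤ volume {x | x ∈ K ∧ 0 ≤ ⟪x, θ⟫} ∧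
      ((4 : ℝ≥0∞))⁻¹ ^ n ≤ volume {x | x ∈ K ∧ R / 2 ≤ ⟪x, θ⟫} := by
  obtain ⟨z, hz⟩ := hKint
  have hzK : z ∈ K := interior_subset hz
  have hR0 : 0 ≤ R := le_trans (abs_nonneg _) (hRabs z hzK)
  have hcont : Continuous fun x : EuclideanSpace ℝ (Fin n) => ⟪x, θ⟫ :=
    continuous_id.inner continuous_const
  obtain ⟨x₀, hx₀K, hx₀max⟩ := hKc.exists_isMaxOn (Set.nonempty_of_mem hzK) hcont.continuousOn
  have hx₀R : ⟪x₀, θ⟫ = R := by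
    rw [hR]
    have hgr : IsGreatest ((fun x => ⟪x, θ⟫) '' K) (⟪x₀, θ⟫) :=
      ⟨⟨x₀, hx₀K, rfl⟩, by rintro y ⟨w, hw, rfl⟩; exact hx₀max hw⟩
    exact hgr.csSup_eq.symm
  have key : ∀ t : ℝ, 0 ≤ t → t ≤ 1 →
      ENNReal.ofReal ((1 - t) ^ n) ≤ volume {x | x ∈ K ∧ (2 * t - 1) * R ≤ ⟪x, θ⟫} := by
    intro t ht0 ht1
    set S := (fun y : EuclideanSpace ℝ (Fin n) => t • x₀ + (1 - t) • y) '' K with hS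
    have hsub : S ⊆ {x | x ∈ K ∧ (2 * t - 1) * R ≤ ⟪x, θ⟫} := by
      rintro _ ⟨y, hy, rfl⟩
      refine ⟨hKconv hx₀K hy ht0 (by linarith) (by ring), ?_⟩
      have h1 : -R ≤ ⟪y, θ⟫ := neg_le_of_abs_le (hRabs y hy)
      have h2 : ⟪t • x₀ + (1 - t) • y, θ⟫ = t * R + (1 - t) * ⟪y, θ⟫ := by
        rw [inner_add_left, real_inner_smul_left, real_inner_smul_left, hx₀R]
      rw [h2]
      nlinarith
    have hSvol : volume S = ENNReal.ofReal ((1 - t) ^ n) := by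
      have hSeq : S = (t • x₀) +ᵥ (((1 - t) • K : Set (EuclideanSpace ℝ (Fin n)))) := by
        ext x
        constructor
        · rintro ⟨y, hy, rfl⟩
          exact ⟨(1 - t) • y, ⟨y, hy, rfl⟩, rfl⟩
        · rintro ⟨w, ⟨y, hy, rfl⟩, rfl⟩
          exact ⟨y, hy, rfl⟩
      rw [hSeq, measure_vadd, Measure.addHaar_smul, hKvol, mul_one,
        finrank_euclideanSpace_fin, abs_of_nonneg (pow_nonneg (by linarith : (0:ℝ) ≤ 1 - t) n)]
    exact hSvol ▸ measure_mono hsub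
  constructor
  · have h := key (1/2) (by norm_num) (by norm_num)
    have e1 : (2 * (1/2 : ℝ) - 1) * R = 0 := by ring
    have e2 : ((2 : ℝ≥0∞))⁻¹ ^ n = ENNReal.ofReal ((1 - 1/2 : ℝ) ^ n) := by
      rw [ENNReal.ofReal_pow (by norm_num)]
      congr 1
      rw [show ((1:ℝ) - 1/2) = (2:ℝ)⁻¹ by norm_num,
        ENNReal.ofReal_inv_of_pos (by norm_num)]
      norm_num
    rw [e2]
    rw [e1] at h
    exact h
  · have h := key (3/4) (by norm_num) (by norm_num)
    have e1 : (2 * (3/4 : ℝ) - 1) * R = R / 2 := by ring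
    have e2 : ((4 : ℝ≥0∞))⁻¹ ^ n = ENNReal.ofReal ((1 - 3/4 : ℝ) ^ n) := by
      rw [ENNReal.ofReal_pow (by norm_num)]
      congr 1
      rw [show ((1:ℝ) - 3/4) = (4:ℝ)⁻¹ by norm_num,
        ENNReal.ofReal_inv_of_pos (by norm_num)]
      norm_num
    rw [e2]
    rw [e1] at h
    exact h
end

section
/- Let K ⊂ ℝⁿ be a convex body of volume one (n ≥ 2) and θ ∈ S^{n-1}. Then sup_{x∈K} |⟨x,θ⟩| ≤ 8 · (∫_K |⟨x,θ⟩|^n dx)^{1/n}. -/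
open MeasureTheory Real Set
open scoped RealInnerProductSpace Pointwise

theorem stmt12 (n : ℕ) (hn : 2 ≤ n) (K : Set (EuclideanSpace ℝ (Fin n)))
    (hKc : IsCompact K) (hKconv : Convex ℝ K) (hKint : (interior K).Nonempty)
    (hKvol : volume K = 1)
    (θ : EuclideanSpace ℝ (Fin n)) (hθ : ‖θ‖ = 1) :
    ∀ x ∈ K, |(⟪x, θ⟫)| ≤ 8 * (∫ y in K, |(⟪y, θ⟫)| ^ (n : ℝ)) ^ (1 / (n : ℝ)) := by
  intro x hx
  have hn0 : (n : ℝ) ≠ 0 := by positivity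
  simp_rw [Real.rpow_natCast]
  have hK_ne : K.Nonempty := ⟨x, hx⟩
  have hcont : Continuous fun y : EuclideanSpace ℝ (Fin n) => |⟪y, θ⟫| :=
    (continuous_id.inner continuous_const).abs
  obtain ⟨x₀, hx₀K, hmax'⟩ := hKc.exists_isMaxOn hK_ne hcont.continuousOn
  have hmax : ∀ y ∈ K, |⟪y, θ⟫| ≤ |⟪x₀, θ⟫| := fun y hy => hmax' hy
  set R : ℝ := |⟪x₀, θ⟫| with hR
  have hR0 : 0 ≤ R := abs_nonneg _
  set I : ℝ := ∫ y in K, |⟪y, θ⟫| ^ n with hI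
  suffices h : R ≤ 8 * I ^ (1 / (n : ℝ)) from le_trans (hmax x hx) h
  set T : Set (EuclideanSpace ℝ (Fin n)) :=
    (fun y => (3/4 : ℝ) • x₀ + (1/4 : ℝ) • y) '' K with hT
  have hTK : T ⊆ K := by
    rintro _ ⟨y, hy, rfl⟩
    exact hKconv hx₀K hy (by norm_num) (by norm_num) (by norm_num)
  have hTval : ∀ z ∈ T, R / 2 ≤ |⟪z, θ⟫| := by
    rintro _ ⟨y, hy, rfl⟩
    have h1 : ⟪(3/4 : ℝ) • x₀ + (1/4 : ℝ) • y, θ⟫ =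
        (3/4 : ℝ) * ⟪x₀, θ⟫ + (1/4 : ℝ) * ⟪y, θ⟫ := by
      rw [inner_add_left, real_inner_smul_left, real_inner_smul_left]
    rw [h1]
    have h2 : |⟪y, θ⟫| ≤ R := hmax y hy
    have h3 : |(3/4 : ℝ) * ⟪x₀, θ⟫| - |(1/4 : ℝ) * ⟪y, θ⟫| ≤
        |(3/4 : ℝ) * ⟪x₀, θ⟫ + (1/4 : ℝ) * ⟪y, θ⟫| := by
      have := abs_sub_abs_le_abs_sub ((3/4 : ℝ) * ⟪x₀, θ⟫) (-((1/4 : ℝ) * ⟪y, θ⟫))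
      simpa using this
    have h4 : |(3/4 : ℝ) * ⟪x₀, θ⟫| = (3/4 : ℝ) * R := by
      have h34 : |(3/4 : ℝ)| = (3/4 : ℝ) := by norm_num
      rw [abs_mul, h34, ← hR]
    have h5 : |(1/4 : ℝ) * ⟪y, θ⟫| ≤ (1/4 : ℝ) * R := by
      rw [abs_mul]
      have : |(1/4 : ℝ)| = (1/4 : ℝ) := by norm_num
      rw [this]; linarith
    linarith
  -- volume of T
  have hTeq : T = ((3/4 : ℝ) • x₀) +ᵥ ((1/4 : ℝ) • K : Set (EuclideanSpace ℝ (Fin n))) := by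
    ext z
    simp only [hT, Set.mem_image, Set.mem_vadd_set, Set.mem_smul_set]
    constructor
    · rintro ⟨y, hy, rfl⟩; exact ⟨(1/4:ℝ) • y, ⟨y, hy, rfl⟩, rfl⟩
    · rintro ⟨_, ⟨y, hy, rfl⟩, rfl⟩; exact ⟨y, hy, rfl⟩
  have hvolT : volume T = ENNReal.ofReal ((1/4 : ℝ) ^ n) := by
    rw [hTeq, measure_vadd, Measure.addHaar_smul, hKvol, mul_one,
      finrank_euclideanSpace_fin]
    rw [abs_of_nonneg (by positivity : (0:ℝ) ≤ (1/4:ℝ)^n)]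
  have hTcompact : IsCompact T := hKc.image (by fun_prop)
  have hTm : MeasurableSet T := hTcompact.measurableSet
  have hIntK : IntegrableOn (fun y => |⟪y, θ⟫| ^ n) K volume :=
    (hcont.pow n).continuousOn.integrableOn_compact hKc
  have step1 : (R / 2) ^ n * (volume T).toReal ≤ ∫ y in T, |⟪y, θ⟫| ^ n := by
    refine setIntegral_ge_of_const_le_real hTm ?_ ?_ (hIntK.mono_set hTK)
    · exact (lt_of_le_of_lt (measure_mono hTK) (hKc.measure_lt_top.trans_le (le_of_eq rfl))).ne
    · intro z hz
      exact pow_le_pow_left₀ (by positivity) (hTval z hz) n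
  have step2 : (∫ y in T, |⟪y, θ⟫| ^ n) ≤ I := by
    refine setIntegral_mono_set hIntK ?_ (HasSubset.Subset.eventuallyLE hTK)
    exact Filter.Eventually.of_forall fun y => by positivity
  have hvolT' : (volume T).toReal = (1/4 : ℝ) ^ n := by
    rw [hvolT, ENNReal.toReal_ofReal (by positivity)]
  have key : (R / 8) ^ n ≤ I := by
    have : (R / 8) ^ n = (R / 2) ^ n * (1/4 : ℝ) ^ n := by
      rw [← mul_pow]; congr 1; ring
    rw [this, ← hvolT']
    exact le_trans step1 step2
  have hstep : R / 8 ≤ I ^ (1 / (n : ℝ)) := by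
    have h1 := Real.rpow_le_rpow (by positivity) key (by positivity : (0:ℝ) ≤ 1 / n)
    rwa [← Real.rpow_natCast (R/8) n, ← Real.rpow_mul (by positivity),
      mul_one_div, div_self hn0, Real.rpow_one] at h1
  linarith
end

section
/- Let K ⊂ ℝⁿ be a convex body of volume one and θ ∈ S^{n-1}. Then sup_{p ≥ 1} p^{-1/2} (∫_K |⟨x,θ⟩|^p dx)^{1/p} ≤ C · sup_{1 ≤ p ≤ n} p^{-1/2} (∫_K |⟨x,θ⟩|^p dx)^{1/p} for an absolute constant C > 0. -/
open MeasureTheory Real Set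
open scoped RealInnerProductSpace

private lemma aux_div_mono_num {a b c : ℝ} (h : a ≤ b) (hc : 0 < c) : a / c ≤ b / c := by
  gcongr

theorem stmt13 :
    ∃ C : ℝ, 0 < C ∧
      ∀ (n : ℕ) (K : Set (EuclideanSpace ℝ (Fin n))),
        IsCompact K → Convex ℝ K → (interior K).Nonempty → volume K = 1 →
        ∀ θ : EuclideanSpace ℝ (Fin n), ‖θ‖ = 1 →
          sSup {y : ℝ | ∃ p : ℝ, 1 ≤ p ∧
              y = (∫ x in K, |(⟪x, θ⟫)| ^ p) ^ (1 / p) / Real.sqrt p}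
            ≤ C * sSup {y : ℝ | ∃ p : ℝ, 1 ≤ p ∧ p ≤ n ∧
              y = (∫ x in K, |(⟪x, θ⟫)| ^ p) ^ (1 / p) / Real.sqrt p} := by
  refine ⟨8, by norm_num, ?_⟩
  intro n K hKc hKconv hKint hKvol θ hθ
  -- n ≥ 1
  have hn : 1 ≤ n := by
    rcases Nat.eq_zero_or_pos n with h | h
    · exfalso
      subst h
      have : θ = 0 := PiLp.ext fun i => i.elim0
      rw [this] at hθ
      simp at hθ
    · exact h
  have hn0 : (n : ℝ) ≠ 0 := Nat.cast_ne_zero.mpr (by omega)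
  have hn1 : (1 : ℝ) ≤ (n : ℝ) := Nat.one_le_cast.mpr hn
  -- continuity of the linear functional
  have hcont : Continuous fun x : EuclideanSpace ℝ (Fin n) => |⟪x, θ⟫| :=
    (continuous_id.inner continuous_const).abs
  -- K nonempty
  have hKne : K.Nonempty := by
    rcases Set.eq_empty_or_nonempty K with h | h
    · exfalso; rw [h] at hKvol; simp at hKvol
    · exact h
  -- maximum point
  obtain ⟨x₀, hx₀K, hx₀max⟩ := hKc.exists_isMaxOn hKne hcont.continuousOn
  set R : ℝ := |⟪x₀, θ⟫| with hRdef
  have hRmax : ∀ x ∈ K, |⟪x, θ⟫| ≤ R := fun x hx => hx₀max hx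
  have hRnn : 0 ≤ R := abs_nonneg _
  -- R > 0
  have hR0 : 0 < R := by
    obtain ⟨z, hz⟩ := hKint
    rw [mem_interior_iff_mem_nhds, Metric.mem_nhds_iff] at hz
    obtain ⟨ε, hε, hball⟩ := hz
    have hθθ : ⟪θ, θ⟫ = 1 := by
      rw [real_inner_self_eq_norm_mul_norm, hθ]; norm_num
    have hmem : ∀ c : ℝ, |c| < ε → z + c • θ ∈ K := by
      intro c hc
      apply hball
      rw [Metric.mem_ball, dist_eq_norm]
      have : z + c • θ - z = c • θ := by abel
      rw [this, norm_smul, hθ]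
      simpa using hc
    have hip : ∀ c : ℝ, ⟪z + c • θ, θ⟫ = ⟪z, θ⟫ + c := by
      intro c
      rw [inner_add_left, real_inner_smul_left, hθθ, mul_one]
    have h1 : |⟪z, θ⟫ + ε/2| ≤ R := by
      have := hRmax _ (hmem (ε/2) (by rw [abs_of_pos (by linarith)]; linarith))
      rwa [hip] at this
    have h2 : |⟪z, θ⟫ + (-(ε/2))| ≤ R := by
      have := hRmax _ (hmem (-(ε/2)) (by rw [abs_of_neg (by linarith)]; linarith))
      rwa [hip] at this
    have := abs_sub_abs_le_abs_sub (⟪z, θ⟫ + ε/2) (⟪z, θ⟫ + (-(ε/2)))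
    have habs : |(⟪z, θ⟫ + ε/2) - (⟪z, θ⟫ + (-(ε/2)))| = ε := by
      rw [show (⟪z, θ⟫ + ε/2) - (⟪z, θ⟫ + (-(ε/2))) = ε by ring, abs_of_pos hε]
    have := abs_sub (⟪z, θ⟫ + ε/2) (⟪z, θ⟫ + (-(ε/2)))
    rw [habs] at this
    linarith
  have hKvol_lt : volume K < ⊤ := by rw [hKvol]; exact ENNReal.one_lt_top
  -- integrability
  have hInt : ∀ p : ℝ, 0 ≤ p →
      IntegrableOn (fun x : EuclideanSpace ℝ (Fin n) => |⟪x, θ⟫| ^ p) K volume := by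
    intro p hp
    exact ((Real.continuous_rpow_const hp).comp hcont).continuousOn.integrableOn_compact hKc
  have hInonneg : ∀ p : ℝ, 0 ≤ ∫ x in K, |⟪x, θ⟫| ^ p := fun p =>
    setIntegral_nonneg hKc.measurableSet fun x _ => Real.rpow_nonneg (abs_nonneg _) _
  -- moment upper bound
  have hIbound : ∀ p : ℝ, 1 ≤ p → (∫ x in K, |⟪x, θ⟫| ^ p) ≤ R ^ p := by
    intro p hp
    have h0p : (0:ℝ) ≤ p := by linarith
    calc (∫ x in K, |⟪x, θ⟫| ^ p) ≤ ∫ _ in K, R ^ p := by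
          apply setIntegral_mono_on (hInt p h0p)
            (integrableOn_const hKvol_lt.ne enorm_ne_top) hKc.measurableSet
          intro x hx
          exact Real.rpow_le_rpow (abs_nonneg _) (hRmax x hx) h0p
      _ = R ^ p := by rw [setIntegral_const, measureReal_def, hKvol]; simp
  have hnum : ∀ p : ℝ, 1 ≤ p → (∫ x in K, |⟪x, θ⟫| ^ p) ^ (1/p) ≤ R := by
    intro p hp
    have hp0 : p ≠ 0 := by positivity
    calc (∫ x in K, |⟪x, θ⟫| ^ p) ^ (1/p) ≤ (R ^ p) ^ (1/p) :=
          Real.rpow_le_rpow (hInonneg p) (hIbound p hp) (by positivity)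
      _ = R := by
          rw [← Real.rpow_mul hRnn, mul_one_div_cancel hp0, Real.rpow_one]
  -- key lower bound on n-th moment
  have hKey : (R/8) ^ (n:ℝ) ≤ ∫ x in K, |⟪x, θ⟫| ^ (n:ℝ) := by
    set φ : EuclideanSpace ℝ (Fin n) → EuclideanSpace ℝ (Fin n) :=
      fun k => (1/4 : ℝ) • (k - x₀) + x₀ with hφdef
    set S : Set (EuclideanSpace ℝ (Fin n)) := φ '' K with hSdef
    have hSsub : S ⊆ K := by
      rintro y ⟨k, hk, rfl⟩
      have hmem := hKconv hx₀K hk (a := 3/4) (b := 1/4)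
        (by norm_num) (by norm_num) (by norm_num)
      have : φ k = (3/4 : ℝ) • x₀ + (1/4 : ℝ) • k := by
        simp only [hφdef, smul_sub]
        module
      rw [this]; exact hmem
    have hφcont : Continuous φ := by fun_prop
    have hSc : IsCompact S := hKc.image hφcont
    have hSmeas : MeasurableSet S := hSc.measurableSet
    have hSvol : volume S = ENNReal.ofReal ((1/4 : ℝ) ^ n) := by
      have heq : S = AffineMap.homothety x₀ (1/4 : ℝ) '' K := by
        apply Set.image_congr
        intro k _
        simp [hφdef, AffineMap.homothety_apply, vsub_eq_sub, vadd_eq_add]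
      rw [heq, Measure.addHaar_image_homothety, hKvol, mul_one,
        finrank_euclideanSpace_fin, abs_of_nonneg (by positivity)]
    have hSvol_lt : volume S < ⊤ :=
      lt_of_le_of_lt (measure_mono hSsub) hKvol_lt
    have hSlower : ∀ y ∈ S, R/2 ≤ |⟪y, θ⟫| := by
      rintro y ⟨k, hk, rfl⟩
      have hφk : ⟪φ k, θ⟫ = (3/4 : ℝ) * ⟪x₀, θ⟫ + (1/4 : ℝ) * ⟪k, θ⟫ := by
        simp only [hφdef]
        rw [inner_add_left, real_inner_smul_left, inner_sub_left]
        ring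
      rw [hφk]
      have hb := hRmax k hk
      rw [abs_le] at hb
      rcases abs_cases (⟪x₀, θ⟫ : ℝ) with ⟨ha, _⟩ | ⟨ha, _⟩
      · rw [le_abs]; left; rw [← hRdef] at ha; linarith [ha]
      · rw [le_abs]; right; rw [← hRdef] at ha; nlinarith [ha, hb.1, hb.2]
    calc (R/8) ^ (n:ℝ) = (R/2) ^ (n:ℝ) * (1/4 : ℝ) ^ (n:ℝ) := by
          rw [← Real.mul_rpow (by positivity) (by positivity)]
          congr 1
          ring
      _ = (volume S).toReal • (R/2) ^ (n:ℝ) := by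
          rw [hSvol, ENNReal.toReal_ofReal (by positivity), ← Real.rpow_natCast (1/4 : ℝ) n]
          rw [smul_eq_mul]; ring
      _ = ∫ _ in S, (R/2) ^ (n:ℝ) := (setIntegral_const _).symm
      _ ≤ ∫ x in S, |⟪x, θ⟫| ^ (n:ℝ) := by
          apply setIntegral_mono_on (integrableOn_const hSvol_lt.ne enorm_ne_top)
            (((hInt (n:ℝ) (by positivity)).mono_set hSsub)) hSmeas
          intro x hx
          exact Real.rpow_le_rpow (by positivity) (hSlower x hx) (by positivity)
      _ ≤ ∫ x in K, |⟪x, θ⟫| ^ (n:ℝ) := by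
          apply setIntegral_mono_set (hInt (n:ℝ) (by positivity))
            (Filter.Eventually.of_forall fun x => Real.rpow_nonneg (abs_nonneg _) _)
            (HasSubset.Subset.eventuallyLE hSsub)
  -- the n-th normalized moment
  set yn : ℝ := (∫ x in K, |⟪x, θ⟫| ^ (n:ℝ)) ^ (1/(n:ℝ)) / Real.sqrt (n:ℝ) with hyn
  have hynnum : R/8 ≤ (∫ x in K, |⟪x, θ⟫| ^ (n:ℝ)) ^ (1/(n:ℝ)) := by
    have := Real.rpow_le_rpow (by positivity) hKey (by positivity : (0:ℝ) ≤ 1/(n:ℝ))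
    rwa [← Real.rpow_mul (by positivity), mul_one_div_cancel hn0, Real.rpow_one] at this
  have hynlow : R/8 / Real.sqrt n ≤ yn := by
    rw [hyn]
    exact aux_div_mono_num hynnum (Real.sqrt_pos.2 (by positivity))
  -- the two sets
  set B := {y : ℝ | ∃ p : ℝ, 1 ≤ p ∧ p ≤ (n:ℝ) ∧
      y = (∫ x in K, |⟪x, θ⟫| ^ p) ^ (1/p) / Real.sqrt p} with hBdef
  have hBbdd : BddAbove B := by
    refine ⟨R, ?_⟩
    rintro y ⟨p, hp1, _, rfl⟩
    have hsq : 1 ≤ Real.sqrt p := Real.le_sqrt_of_sq_le (by nlinarith)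
    calc (∫ x in K, |⟪x, θ⟫| ^ p) ^ (1/p) / Real.sqrt p
        ≤ (∫ x in K, |⟪x, θ⟫| ^ p) ^ (1/p) :=
          div_le_self (Real.rpow_nonneg (hInonneg p) _) hsq
      _ ≤ R := hnum p hp1
  have hynB : yn ∈ B := ⟨(n:ℝ), hn1, le_refl _, rfl⟩
  have hynle : yn ≤ sSup B := le_csSup hBbdd hynB
  have hBnn : 0 ≤ sSup B := le_trans (by positivity : (0:ℝ) ≤ yn) hynle
  -- conclude
  apply Real.sSup_le
  · rintro y ⟨p, hp1, rfl⟩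
    by_cases hpn : p ≤ (n:ℝ)
    · calc (∫ x in K, |⟪x, θ⟫| ^ p) ^ (1/p) / Real.sqrt p
          ≤ sSup B := le_csSup hBbdd ⟨p, hp1, hpn, rfl⟩
        _ ≤ 8 * sSup B := by linarith
    · push_neg at hpn
      have hsqn : (0:ℝ) < Real.sqrt n := Real.sqrt_pos.2 (by positivity)
      have hsqp : Real.sqrt n ≤ Real.sqrt p := Real.sqrt_le_sqrt hpn.le
      calc (∫ x in K, |⟪x, θ⟫| ^ p) ^ (1/p) / Real.sqrt p
          ≤ R / Real.sqrt p := by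
            have hsp : (0:ℝ) < Real.sqrt p := lt_of_lt_of_le hsqn hsqp
            exact aux_div_mono_num (hnum p hp1) hsp
        _ ≤ R / Real.sqrt n := by
            exact div_le_div_of_nonneg_left hRnn hsqn hsqp
        _ = 8 * (R/8 / Real.sqrt n) := by ring
        _ ≤ 8 * yn := by linarith [hynlow]
        _ ≤ 8 * sSup B := by linarith [hynle]
  · linarith
end
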